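/- There exist a real constant β > 0 and an integer D₀ such that for every integer D ≥ D₀, every positive integer N, every degree-D MAX-3-LIN-2 instance J, and every index i in Fin N, the probability that |F_i(v)| ≥ (1/2)·D^{3/4} is at most exp(−β·D^{1/4}). -/

import Mathlib

/-- A degree-`D` MAX-3-LIN-2 instance on `N` spins: `J` takes values in `{-1, 0, +1}`,
is symmetric under all permutations of its three arguments, vanishes whenever two
indices coincide, and every spin participates in exactly `D` distinct terms
(`∑_{j,k} J(i,j,k)² = 2·D` for every `i`). -/
def IsMax3Lin2 (N D : ℕ) (J : Fin N → Fin N → Fin N → ℝ) : Prop :=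
  (∀ i j k, J i j k = -1 ∨ J i j k = 0 ∨ J i j k = 1) ∧
  (∀ i j k, J i j k = J j i k) ∧
  (∀ i j k, J i j k = J i k j) ∧
  (∀ i j k, (i = j ∨ i = k ∨ j = k) → J i j k = 0) ∧
  (∀ i, ∑ j, ∑ k, (J i j k) ^ 2 = 2 * D)

/-- The random vector associated to a choice of signs: each coordinate is `+1/2` or `-1/2`. -/
noncomputable def signedVec {N : ℕ} (s : Fin N → Bool) : Fin N → ℝ :=
  fun i => if s i then 1 / 2 else -(1 / 2)

/-- Expectation over a random vector `v : Fin N → ℝ` whose coordinates are independent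
and uniform on `{-1/2, +1/2}`: average over all `2^N` sign patterns. -/
noncomputable def expect (N : ℕ) (f : (Fin N → ℝ) → ℝ) : ℝ :=
  (∑ s : Fin N → Bool, f (signedVec s)) / 2 ^ N

/-- The force `F_i(v) = (1/2)·∑_{j,k} J(i,j,k)·v_j·v_k`. -/
noncomputable def force {N : ℕ} (J : Fin N → Fin N → Fin N → ℝ)
    (v : Fin N → ℝ) (i : Fin N) : ℝ :=
  (1 / 2) * ∑ j, ∑ k, J i j k * v j * v k

/-!
With `J(i,·,·)` fixed, the force `F_i` is a quadratic form in independent `±1/2` spins with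
`E[F_i²] = D/16`. Moments of such forms are controlled by hypercontractivity,
`E[F_i^{2m}] ≤ ((2m-1)² · D/16)^m`, proved one spin at a time: writing the polynomial as
`G + x H` with `x = ±1/2`, the two-point inequality `(a+b)^{2m} + (a-b)^{2m} ≤ 2 (a² + (2m-1) b²)^m`
and Minkowski's inequality in `L^m` reduce the bound to the quadratic `G` and the affine `H` in the
remaining spins. Markov's inequality at `m ≈ D^{1/4}/2` then bounds the tail by
`(1/4)^m ≤ exp(-D^{1/4}/4)`.
-/

theorem Finset.sum_range_two_mul_add_one_of_odd {M : Type*} [AddCommMonoid M] (m : ℕ)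
    (f : ℕ → M) (hf : ∀ k, Odd k → f k = 0) :
    ∑ k ∈ range (2 * m + 1), f k = ∑ j ∈ range (m + 1), f (2 * j) := by
  induction m with
  | zero => simp
  | succ m ih =>
    rw [show 2 * (m + 1) + 1 = 2 * m + 1 + 1 + 1 by ring, sum_range_succ, sum_range_succ, ih,
      hf _ (odd_two_mul_add_one m), add_zero, sum_range_succ (n := m + 1)]
    rfl

/-- `C(2m, 2j) / C(m, j) = ∏_{i<j} (2m - 2i - 1) / (2i + 1)`, each factor at most `2m - 1`. -/
theorem Nat.choose_two_mul_two_mul_le {m j : ℕ} (hj : j ≤ m) :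
    (2 * m).choose (2 * j) ≤ m.choose j * (2 * m - 1) ^ j := by
  induction j with
  | zero => simp
  | succ j ih =>
    obtain ⟨p, rfl⟩ : ∃ p, m = j + 1 + p := ⟨m - (j + 1), by omega⟩
    have h1 := Nat.choose_succ_right_eq (2 * (j + 1 + p)) (2 * j)
    have h2 := Nat.choose_succ_right_eq (2 * (j + 1 + p)) (2 * j + 1)
    have h3 := Nat.choose_succ_right_eq (j + 1 + p) j
    have ih := ih (by omega)
    rw [show 2 * (j + 1 + p) - 2 * j = 2 * (p + 1) by omega] at h1
    rw [show 2 * (j + 1 + p) - (2 * j + 1) = 2 * p + 1 by omega] at h2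
    rw [show j + 1 + p - j = p + 1 by omega] at h3
    rw [show 2 * (j + 1 + p) - 1 = 2 * j + 2 * p + 1 by omega] at ih ⊢
    rw [show 2 * (j + 1) = 2 * j + 1 + 1 by ring]
    refine Nat.le_of_mul_le_mul_right (c := (2 * j + 2) * (2 * j + 1)) ?_ (by positivity)
    have hodd : 2 * p + 1 ≤ (2 * j + 2 * p + 1) * (2 * j + 1) := by nlinarith
    calc _ = (2 * (j + 1 + p)).choose (2 * j) * (2 * (p + 1)) * (2 * p + 1) := by
          linear_combination (2 * j + 1) * h2 + (2 * p + 1) * h1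
      _ ≤ (j + 1 + p).choose j * (2 * j + 2 * p + 1) ^ j * (2 * (p + 1))
            * ((2 * j + 2 * p + 1) * (2 * j + 1)) := by gcongr
      _ = _ := by
          rw [pow_succ]
          linear_combination (2 * (2 * j + 1) * (2 * j + 2 * p + 1) ^ (j + 1)) * h3.symm

open Finset in
theorem add_pow_two_mul_add_sub_pow_two_mul_le (m : ℕ) (a b : ℝ) :
    (a + b) ^ (2 * m) + (a - b) ^ (2 * m) ≤ 2 * (a ^ 2 + (2 * m - 1) * b ^ 2) ^ m := by
  rcases Nat.eq_zero_or_pos m with rfl | hm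
  · norm_num
  have hκ : ((2 * m - 1 : ℕ) : ℝ) = 2 * m - 1 := by rw [Nat.cast_sub (by omega)]; push_cast; ring
  have hlhs : (a + b) ^ (2 * m) + (a - b) ^ (2 * m)
      = ∑ j ∈ range (m + 1), 2 * (b ^ 2) ^ j * (a ^ 2) ^ (m - j) * (2 * m).choose (2 * j) := by
    rw [add_comm a, sub_eq_neg_add, add_pow, add_pow, ← sum_add_distrib,
      sum_range_two_mul_add_one_of_odd m]
    · refine sum_congr rfl fun j hj => ?_
      rw [(even_two_mul j).neg_pow, show 2 * m - 2 * j = 2 * (m - j) by omega, pow_mul,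
        pow_mul]
      ring
    · intro k hk
      rw [hk.neg_pow]
      ring
  have hrhs : (a ^ 2 + (2 * m - 1) * b ^ 2) ^ m
      = ∑ j ∈ range (m + 1), ((2 * m - 1) * b ^ 2) ^ j * (a ^ 2) ^ (m - j) * m.choose j := by
    rw [add_comm, add_pow]
  rw [hlhs, hrhs, mul_sum]
  refine sum_le_sum fun j hj => ?_
  have hchoose : ((2 * m).choose (2 * j) : ℝ) ≤ m.choose j * (2 * m - 1) ^ j := by
    rw [← hκ]
    exact_mod_cast Nat.choose_two_mul_two_mul_le (by simpa [Nat.lt_succ_iff] using hj)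
  have hpos : 0 ≤ 2 * (b ^ 2) ^ j * (a ^ 2) ^ (m - j) := by positivity
  calc _ ≤ 2 * (b ^ 2) ^ j * (a ^ 2) ^ (m - j) * (m.choose j * (2 * m - 1) ^ j) :=
        mul_le_mul_of_nonneg_left hchoose hpos
    _ = _ := by rw [mul_pow]; ring

theorem sum_add_pow_le_of_sum_pow_le {ι : Type*} (s : Finset ι) {m : ℕ} (hm : 1 ≤ m)
    {f g : ι → ℝ} (hf : ∀ i ∈ s, 0 ≤ f i) (hg : ∀ i ∈ s, 0 ≤ g i) {α γ : ℝ} (hα : 0 ≤ α)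
    (hγ : 0 ≤ γ) (hfα : ∑ i ∈ s, f i ^ m ≤ α ^ m) (hgγ : ∑ i ∈ s, g i ^ m ≤ γ ^ m) :
    ∑ i ∈ s, (f i + g i) ^ m ≤ (α + γ) ^ m := by
  have hm0 : m ≠ 0 := by omega
  have root_le {h : ι → ℝ} {β : ℝ} (hh : ∀ i ∈ s, 0 ≤ h i) (hβ : 0 ≤ β)
      (hhβ : ∑ i ∈ s, h i ^ m ≤ β ^ m) : (∑ i ∈ s, h i ^ m) ^ (1 / (m : ℝ)) ≤ β := by
    calc _ ≤ (β ^ m) ^ (1 / (m : ℝ)) := by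
          gcongr
          exact Finset.sum_nonneg fun i hi => pow_nonneg (hh i hi) m
      _ = β := by rw [one_div, Real.pow_rpow_inv_natCast hβ hm0]
  have hmink := Real.Lp_add_le_of_nonneg (s := s) (p := m) (by exact_mod_cast hm) hf hg
  simp only [Real.rpow_natCast] at hmink
  have hsum : 0 ≤ ∑ i ∈ s, (f i + g i) ^ m :=
    Finset.sum_nonneg fun i hi => pow_nonneg (add_nonneg (hf i hi) (hg i hi)) m
  calc ∑ i ∈ s, (f i + g i) ^ m = ((∑ i ∈ s, (f i + g i) ^ m) ^ (1 / (m : ℝ))) ^ m := by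
        rw [one_div, Real.rpow_inv_natCast_pow hsum hm0]
    _ ≤ (α + γ) ^ m := by
        gcongr
        exact hmink.trans (add_le_add (root_le hf hα hfα) (root_le hg hγ hgγ))

section Expect

variable {N : ℕ}

theorem expect_const (c : ℝ) : expect N (fun _ => c) = c := by
  simp [expect]

theorem expect_add (f g : (Fin N → ℝ) → ℝ) :
    expect N (fun v => f v + g v) = expect N f + expect N g := by
  simp only [expect, Finset.sum_add_distrib, add_div]

theorem expect_const_mul (c : ℝ) (f : (Fin N → ℝ) → ℝ) :
    expect N (fun v => c * f v) = c * expect N f := by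
  simp only [expect, ← Finset.mul_sum, mul_div_assoc]

theorem expect_mono {f g : (Fin N → ℝ) → ℝ} (h : ∀ v, f v ≤ g v) : expect N f ≤ expect N g := by
  unfold expect
  gcongr with s
  exact h _

theorem signedVec_cons (b : Bool) (s : Fin N → Bool) :
    signedVec (Fin.cons b s : Fin (N + 1) → Bool) =
      Fin.cons (if b then 1 / 2 else -(1 / 2)) (signedVec s) := by
  ext i
  cases i using Fin.cases <;> simp [signedVec]

theorem expect_succ (f : (Fin (N + 1) → ℝ) → ℝ) :
    expect (N + 1) f =
      (expect N (fun v => f (Fin.cons (1 / 2) v)) + expect N (fun v => f (Fin.cons (-(1 / 2)) v)))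
        / 2 := by
  have hcons (p : Bool × (Fin N → Bool)) : Fin.consEquiv (fun _ => Bool) p = Fin.cons p.1 p.2 :=
    rfl
  rw [expect, ← (Fin.consEquiv fun _ => Bool).sum_comp, Fintype.sum_prod_type, Fintype.sum_bool]
  simp only [hcons, signedVec_cons, if_true, Bool.false_eq_true, if_false, expect]
  ring

theorem expect_add_pow_le {m : ℕ} (hm : 1 ≤ m) {f g : (Fin N → ℝ) → ℝ} (hf : ∀ v, 0 ≤ f v)
    (hg : ∀ v, 0 ≤ g v) {α γ : ℝ} (hα : 0 ≤ α) (hγ : 0 ≤ γ)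
    (hfα : expect N (fun v => f v ^ m) ≤ α ^ m) (hgγ : expect N (fun v => g v ^ m) ≤ γ ^ m) :
    expect N (fun v => (f v + g v) ^ m) ≤ (α + γ) ^ m := by
  set c : ℝ := (2 ^ N : ℝ) ^ ((m : ℝ)⁻¹)
  have hc : 0 ≤ c := by positivity
  have hcm : c ^ m = 2 ^ N := Real.rpow_inv_natCast_pow (by positivity) (by omega)
  have scale {h : (Fin N → ℝ) → ℝ} {β : ℝ} (hhβ : expect N (fun v => h v ^ m) ≤ β ^ m) :
      ∑ s : Fin N → Bool, h (signedVec s) ^ m ≤ (c * β) ^ m := by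
    rwa [mul_pow, hcm, ← div_le_iff₀' (by positivity)]
  have := sum_add_pow_le_of_sum_pow_le Finset.univ hm (fun s _ => hf (signedVec s))
    (fun s _ => hg (signedVec s)) (mul_nonneg hc hα) (mul_nonneg hc hγ) (scale hfα) (scale hgγ)
  rwa [← mul_add, mul_pow, hcm, ← div_le_iff₀' (by positivity)] at this

theorem expect_succ_pow_le {m : ℕ} (hm : 1 ≤ m) {P : (Fin (N + 1) → ℝ) → ℝ}
    {G H : (Fin N → ℝ) → ℝ} (hP : ∀ x v, P (Fin.cons x v) = G v + x * H v) {α γ : ℝ}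
    (hα : 0 ≤ α) (hγ : 0 ≤ γ) (hG : expect N (fun v => G v ^ (2 * m)) ≤ α ^ m)
    (hH : expect N (fun v => H v ^ (2 * m)) ≤ γ ^ m) :
    expect (N + 1) (fun v => P v ^ (2 * m)) ≤ (α + (2 * m - 1) * γ / 4) ^ m := by
  have hκ : (0 : ℝ) ≤ 2 * m - 1 := by
    have : (1 : ℝ) ≤ m := by exact_mod_cast hm
    linarith
  have hG' : expect N (fun v => (G v ^ 2) ^ m) ≤ α ^ m := by simpa only [← pow_mul] using hG
  have hH' : expect N (fun v => ((2 * m - 1) * (H v / 2) ^ 2) ^ m) ≤ ((2 * m - 1) * γ / 4) ^ m := by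
    calc _ = ((2 * m - 1) / 4) ^ m * expect N (fun v => H v ^ (2 * m)) := by
          rw [← expect_const_mul]
          congr 1 with v
          rw [pow_mul, ← mul_pow]
          ring
      _ ≤ ((2 * m - 1) / 4) ^ m * γ ^ m := by gcongr
      _ = _ := by rw [← mul_pow]; ring
  calc expect (N + 1) (fun v => P v ^ (2 * m))
      = (1 / 2) * expect N (fun v => (G v + H v / 2) ^ (2 * m) + (G v - H v / 2) ^ (2 * m)) := by
        rw [expect_succ, expect_add]
        simp only [hP]
        ring_nf
    _ ≤ (1 / 2) * expect N (fun v => 2 * (G v ^ 2 + (2 * m - 1) * (H v / 2) ^ 2) ^ m) := by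
        gcongr
        exact expect_mono fun v => add_pow_two_mul_add_sub_pow_two_mul_le m _ _
    _ = expect N (fun v => (G v ^ 2 + (2 * m - 1) * (H v / 2) ^ 2) ^ m) := by
        rw [expect_const_mul]; ring
    _ ≤ (α + (2 * m - 1) * γ / 4) ^ m :=
        expect_add_pow_le hm (fun v => by positivity) (fun v => by positivity) hα (by positivity)
          hG' hH'

theorem expect_linear_pow_le {m : ℕ} (hm : 1 ≤ m) (c : ℝ) (b : Fin N → ℝ) :
    expect N (fun v => (c + ∑ j, b j * v j) ^ (2 * m))
      ≤ ((2 * m - 1) * (c ^ 2 + (∑ j, b j ^ 2) / 4)) ^ m := by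
  have hκ : (1 : ℝ) ≤ 2 * m - 1 := by
    have : (1 : ℝ) ≤ m := by exact_mod_cast hm
    linarith
  induction N generalizing c with
  | zero =>
    simp only [Finset.univ_eq_empty, Finset.sum_empty, add_zero, zero_div, expect_const, pow_mul]
    gcongr
    nlinarith [sq_nonneg c]
  | succ N ih =>
    have hP (x : ℝ) (v : Fin N → ℝ) : c + ∑ j, b j * (Fin.cons x v : Fin (N + 1) → ℝ) j
        = (c + ∑ j, b j.succ * v j) + x * b 0 := by
      simp only [Fin.sum_univ_succ, Fin.cons_zero, Fin.cons_succ]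
      ring
    have hb : expect N (fun _ => b 0 ^ (2 * m)) ≤ (b 0 ^ 2) ^ m := by
      rw [expect_const, pow_mul]
    refine (expect_succ_pow_le hm hP (by positivity) (by positivity) (ih c _) hb).trans_eq ?_
    rw [Fin.sum_univ_succ]
    ring

theorem sum_sum_mul_cons_mul_cons {a : Fin (N + 1) → Fin (N + 1) → ℝ} (ha : a 0 0 = 0) (x : ℝ)
    (v : Fin N → ℝ) :
    ∑ j, ∑ k, a j k * (Fin.cons x v : Fin (N + 1) → ℝ) j * (Fin.cons x v : Fin (N + 1) → ℝ) k
      = x * ∑ j, (a 0 j.succ + a j.succ 0) * v j + ∑ j, ∑ k, a j.succ k.succ * v j * v k := by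
  simp only [Fin.sum_univ_succ, Fin.cons_zero, Fin.cons_succ, ha, add_mul, mul_add,
    Finset.sum_add_distrib, Finset.mul_sum, mul_assoc]
  ring_nf

/-- The quantity `c² + ∑ b_j²/4 + ∑ a_jk²/8` bounds `E[P²]`: `v_j² = 1/4`, and the pair
`{j, k}` contributes `(a_jk + a_kj)²/16 ≤ (a_jk² + a_kj²)/8`. -/
theorem expect_quadratic_pow_le {m : ℕ} (hm : 1 ≤ m) (c : ℝ) (b : Fin N → ℝ)
    (a : Fin N → Fin N → ℝ) (ha : ∀ j, a j j = 0) :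
    expect N (fun v => (c + ∑ j, b j * v j + ∑ j, ∑ k, a j k * v j * v k) ^ (2 * m))
      ≤ ((2 * m - 1) ^ 2 * (c ^ 2 + (∑ j, b j ^ 2) / 4 + (∑ j, ∑ k, a j k ^ 2) / 8)) ^ m := by
  have hκ : (1 : ℝ) ≤ 2 * m - 1 := by
    have : (1 : ℝ) ≤ m := by exact_mod_cast hm
    linarith
  induction N generalizing c with
  | zero =>
    simp only [Finset.univ_eq_empty, Finset.sum_empty, add_zero, zero_div, expect_const, pow_mul]
    gcongr
    nlinarith [sq_nonneg c, one_le_pow₀ (n := 2) hκ]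
  | succ N ih =>
    have hP (x : ℝ) (v : Fin N → ℝ) :
        c + ∑ j, b j * (Fin.cons x v : Fin (N + 1) → ℝ) j
          + ∑ j, ∑ k, a j k * (Fin.cons x v : Fin (N + 1) → ℝ) j
              * (Fin.cons x v : Fin (N + 1) → ℝ) k
        = (c + ∑ j : Fin N, b j.succ * v j + ∑ j : Fin N, ∑ k : Fin N, a j.succ k.succ * v j * v k)
          + x * (b 0 + ∑ j : Fin N, (a 0 j.succ + a j.succ 0) * v j) := by
      rw [sum_sum_mul_cons_mul_cons (ha 0), Fin.sum_univ_succ]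
      simp only [Fin.cons_zero, Fin.cons_succ]
      ring
    have hvar : (c ^ 2 + (∑ j : Fin N, b j.succ ^ 2) / 4
          + (∑ j : Fin N, ∑ k : Fin N, a j.succ k.succ ^ 2) / 8)
        + (b 0 ^ 2 + (∑ j : Fin N, (a 0 j.succ + a j.succ 0) ^ 2) / 4) / 4
        ≤ c ^ 2 + (∑ j, b j ^ 2) / 4 + (∑ j, ∑ k, a j k ^ 2) / 8 := by
      have hcross : ∑ j : Fin N, (a 0 j.succ + a j.succ 0) ^ 2
          ≤ 2 * (∑ j : Fin N, a 0 j.succ ^ 2 + ∑ j : Fin N, a j.succ 0 ^ 2) := by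
        rw [← Finset.sum_add_distrib, Finset.mul_sum]
        exact Finset.sum_le_sum fun j _ => add_sq_le
      have hsplit : ∑ j, ∑ k, a j k ^ 2 = a 0 0 ^ 2 + ∑ j : Fin N, a 0 j.succ ^ 2
          + ∑ j : Fin N, a j.succ 0 ^ 2 + ∑ j : Fin N, ∑ k : Fin N, a j.succ k.succ ^ 2 := by
        simp only [Fin.sum_univ_succ (f := fun k => a _ k ^ 2), Fin.sum_univ_succ (n := N),
          Finset.sum_add_distrib]
        ring
      rw [Fin.sum_univ_succ (f := fun j => b j ^ 2), hsplit]
      nlinarith [sq_nonneg (a 0 0)]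
    refine (expect_succ_pow_le hm hP (by positivity) (by positivity)
      (ih c (fun j => b j.succ) (fun j k => a j.succ k.succ) fun j => ha j.succ)
      (expect_linear_pow_le hm (b 0) fun j => a 0 j.succ + a j.succ 0)).trans ?_
    gcongr ?_ ^ m
    nlinarith [mul_le_mul_of_nonneg_left hvar (sq_nonneg (2 * m - 1 : ℝ))]

theorem card_filter_le_abs_div_le (f : (Fin N → ℝ) → ℝ) {T : ℝ} (hT : 0 < T) (m : ℕ) :
    ((Finset.univ.filter fun s : Fin N → Bool => T ≤ |f (signedVec s)|).card : ℝ) / 2 ^ N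
      ≤ expect N (fun v => f v ^ (2 * m)) / T ^ (2 * m) := by
  set E := Finset.univ.filter fun s : Fin N → Bool => T ≤ |f (signedVec s)|
  have hnonneg (s : Fin N → Bool) : 0 ≤ f (signedVec s) ^ (2 * m) :=
    (even_two_mul m).pow_nonneg _
  have hcard : (E.card : ℝ) * T ^ (2 * m) ≤ ∑ s, f (signedVec s) ^ (2 * m) :=
    calc (E.card : ℝ) * T ^ (2 * m) = ∑ _s ∈ E, T ^ (2 * m) := by
          rw [Finset.sum_const, nsmul_eq_mul]
      _ ≤ ∑ s ∈ E, f (signedVec s) ^ (2 * m) := by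
          refine Finset.sum_le_sum fun s hs => ?_
          rw [← (even_two_mul m).pow_abs (f (signedVec s))]
          exact pow_le_pow_left₀ hT.le (Finset.mem_filter.mp hs).2 _
      _ ≤ ∑ s, f (signedVec s) ^ (2 * m) :=
          Finset.sum_le_sum_of_subset_of_nonneg (Finset.subset_univ _) fun s _ _ => hnonneg s
  rw [le_div_iff₀ (by positivity), expect, div_mul_eq_mul_div]
  exact div_le_div_of_nonneg_right hcard (by positivity)

end Expect

theorem expect_force_pow_le {N D : ℕ} {J : Fin N → Fin N → Fin N → ℝ} (hJ : IsMax3Lin2 N D J)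
    (i : Fin N) {m : ℕ} (hm : 1 ≤ m) :
    expect N (fun v => force J v i ^ (2 * m)) ≤ ((2 * m - 1) ^ 2 * (D / 16)) ^ m := by
  obtain ⟨-, -, -, hdiag, hdeg⟩ := hJ
  calc expect N (fun v => force J v i ^ (2 * m))
      = expect N (fun v => (0 + ∑ j, 0 * v j + ∑ j, ∑ k, J i j k / 2 * v j * v k) ^ (2 * m)) := by
        simp only [force, zero_mul, Finset.sum_const_zero, zero_add, Finset.mul_sum]
        ring_nf
    _ ≤ _ := expect_quadratic_pow_le hm 0 (fun _ => 0) (fun j k => J i j k / 2)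
        fun j => by simp [hdiag i j j (Or.inr (Or.inr rfl))]
    _ = _ := by
        simp only [div_pow, ← Finset.sum_div, hdeg i, zero_pow two_ne_zero, Finset.sum_const_zero]
        ring

theorem moment_div_pow_le {d : ℝ} {m : ℕ} (hd : 0 < d) (hm : 1 ≤ m) (hmd : 2 * m - 1 ≤ d) :
    ((2 * m - 1) ^ 2 * (d ^ 4 / 16)) ^ m / (1 / 2 * d ^ 3) ^ (2 * m) ≤ (1 / 4) ^ m := by
  have hκ : (1 : ℝ) ≤ 2 * m - 1 := by
    have : (1 : ℝ) ≤ m := by exact_mod_cast hm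
    linarith
  rw [pow_mul, ← div_pow]
  refine pow_le_pow_left₀ (by positivity) ?_ m
  rw [div_le_iff₀' (by positivity)]
  have : (2 * m - 1 : ℝ) ^ 2 ≤ d ^ 2 := by gcongr
  nlinarith [pow_pos hd 4]

theorem one_div_four_pow_le_exp {d : ℝ} {m : ℕ} (hm : d / 4 ≤ m) :
    (1 / 4 : ℝ) ^ m ≤ Real.exp (-(1 / 4) * d) := by
  have hexp : (1 / 4 : ℝ) ≤ Real.exp (-1) := by
    rw [Real.exp_neg, one_div]
    gcongr
    linarith [Real.exp_one_lt_d9]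
  calc (1 / 4 : ℝ) ^ m ≤ Real.exp (-1) ^ m := by gcongr
    _ = Real.exp (m * -1) := (Real.exp_nat_mul _ m).symm
    _ ≤ Real.exp (-(1 / 4) * d) := by
        rw [Real.exp_le_exp]
        linarith

/-- There exist `β > 0` and an integer `D₀` such that for every
`D ≥ D₀`, every positive `N`, every degree-`D` MAX-3-LIN-2 instance `J`, and every
index `i`, the probability that `|F_i(v)| ≥ (1/2)·D^(3/4)` is at most
`exp(−β·D^(1/4))`.  The probability is the fraction of the `2^N` sign patterns for
which the event holds. -/
theorem stmt10 : ∃ β : ℝ, β > 0 ∧ ∃ D₀ : ℕ, ∀ D : ℕ, D₀ ≤ D → ∀ N : ℕ, 0 < N →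
    ∀ J : Fin N → Fin N → Fin N → ℝ, IsMax3Lin2 N D J → ∀ i : Fin N,
    ((Finset.univ.filter fun s : Fin N → Bool =>
        (1 / 2) * (D : ℝ) ^ ((3 : ℝ) / 4) ≤ |force J (signedVec s) i|).card : ℝ) / 2 ^ N
      ≤ Real.exp (-β * (D : ℝ) ^ ((1 : ℝ) / 4)) := by
  refine ⟨1 / 4, by norm_num, 256, fun D hD N _ J hJ i => ?_⟩
  set d : ℝ := (D : ℝ) ^ ((1 : ℝ) / 4)
  have hd4 : d ^ 4 = D := by rw [← Real.rpow_natCast, ← Real.rpow_mul D.cast_nonneg]; norm_num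
  have hd3 : (D : ℝ) ^ ((3 : ℝ) / 4) = d ^ 3 := by
    rw [← Real.rpow_natCast, ← Real.rpow_mul D.cast_nonneg]; norm_num
  have hd : 4 ≤ d := le_of_pow_le_pow_left₀ four_ne_zero (by positivity) <| by
    rw [hd4]; exact_mod_cast (by norm_num : 4 ^ 4 ≤ 256).trans hD
  set m := ⌊d / 2⌋₊
  have hm1 : 1 ≤ m := Nat.le_floor (by push_cast; linarith)
  have hmd : 2 * (m : ℝ) - 1 ≤ d := by linarith [Nat.floor_le (by positivity : 0 ≤ d / 2)]
  have hm_ge : d / 4 ≤ m := by linarith [Nat.lt_floor_add_one (d / 2)]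
  rw [hd3]
  calc _ ≤ expect N (fun v => force J v i ^ (2 * m)) / (1 / 2 * d ^ 3) ^ (2 * m) :=
        card_filter_le_abs_div_le _ (by positivity) m
    _ ≤ ((2 * m - 1) ^ 2 * (d ^ 4 / 16)) ^ m / (1 / 2 * d ^ 3) ^ (2 * m) := by
        rw [hd4]
        gcongr
        exact expect_force_pow_le hJ i hm1
    _ ≤ (1 / 4) ^ m := moment_div_pow_le (by positivity) hm1 hmd
    _ ≤ _ := one_div_four_pow_le_exp hm_ge
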